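/- arXiv:2111.01248 — 7 statements merged into one kernel-verified Lean document; each statement's English description precedes it below -/
import Mathlib

section
/- If a consumption experiment E = ((x^t, m^t), B^t)_{t=1}^T can be rationalized by a quasilinear utility function v(x,m) = u(x) + m (i.e., u(x^t) + m^t ≥ u(x) + m for every (x,m) ∈ B^t and every t), then E satisfies cyclical monotonicity: for every finite sequence of observation indices k_1, ..., k_n ∈ {1,...,T}, the sum over j of [μ^{k_j}(x^{k_j}) − μ^{k_{j+1}}(x^{k_j})] is nonnegative, where k_{n+1} = k_1. -/
/-! Rationalizability at observation `t` applied to the affordable bundle `(xs s, μ t (xs s))`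
makes the indirect utility `f t = u (xs t) + μ t (xs t)` a potential: the step
`μ s (xs s) - μ t (xs s)` is at least `f s - f t`. Around a cycle these lower bounds telescope
to `0`. -/

open Finset

theorem sum_range_cycle_nonneg_of_sub_le {α G : Type*} [AddCommGroup G] [PartialOrder G]
    [IsOrderedAddMonoid G] (f : α → G) (c : α → α → G) (hfc : ∀ a b, f a - f b ≤ c a b)
    (k : ℕ → α) (N : ℕ) (hk : k N = k 0) :
    0 ≤ ∑ j ∈ range N, c (k j) (k (j + 1)) :=
  calc (0 : G) = ∑ j ∈ range N, (f (k j) - f (k (j + 1))) := by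
          rw [sum_range_sub', hk, sub_self]
    _ ≤ ∑ j ∈ range N, c (k j) (k (j + 1)) := sum_le_sum fun j _ => hfc _ _

theorem ql_rationalization_implies_cyclical_monotonicity_general {n T : ℕ}
    (X : Set (Fin n → ℝ)) (xs : Fin T → (Fin n → ℝ)) (hxX : ∀ t, xs t ∈ X)
    (μ : Fin T → (Fin n → ℝ) → ℝ)
    (u : (Fin n → ℝ) → ℝ)
    (hrat : ∀ t, ∀ x ∈ X, ∀ m : ℝ, m ≤ μ t x → u x + m ≤ u (xs t) + μ t (xs t)) :
    ∀ (N : ℕ) (k : ℕ → Fin T), 0 < N → k N = k 0 →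
      0 ≤ ∑ j ∈ Finset.range N,
        (μ (k j) (xs (k j)) - μ (k (j + 1)) (xs (k j))) := by
  intro N k _ hk
  refine sum_range_cycle_nonneg_of_sub_le (fun t => u (xs t) + μ t (xs t))
    (fun s t => μ s (xs s) - μ t (xs s)) (fun s t => ?_) k N hk
  have := hrat t (xs s) (hxX s) (μ t (xs s)) le_rfl
  linarith

/-- Necessity: if a consumption experiment is rationalized by a quasilinear utility
`v(x,m) = u(x) + m`, then it satisfies cyclical monotonicity. -/
theorem ql_rationalization_implies_cyclical_monotonicity {n T : ℕ} (hT : 0 < T)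
    (X : Set (Fin n → ℝ)) (xs : Fin T → (Fin n → ℝ)) (hxX : ∀ t, xs t ∈ X)
    (μ : Fin T → (Fin n → ℝ) → ℝ)
    (hcont : ∀ t, ContinuousOn (μ t) X)
    (hdecr : ∀ t, ∀ x ∈ X, ∀ y ∈ X, x ≤ y → μ t y ≤ μ t x)
    (u : (Fin n → ℝ) → ℝ)
    (hrat : ∀ t, ∀ x ∈ X, ∀ m : ℝ, m ≤ μ t x → u x + m ≤ u (xs t) + μ t (xs t)) :
    ∀ (N : ℕ) (k : ℕ → Fin T), 0 < N → k N = k 0 →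
      0 ≤ ∑ j ∈ Finset.range N,
        (μ (k j) (xs (k j)) - μ (k (j + 1)) (xs (k j))) :=
  ql_rationalization_implies_cyclical_monotonicity_general X xs hxX μ u hrat
end

section
/- If a consumption experiment satisfies cyclical monotonicity, then it can be rationalized by a quasilinear utility function v(x,m) = u(x) + m; moreover, u can be chosen continuous and monotone (decreasing in each coordinate of x interpreted appropriately, i.e., monotone with respect to the order induced by the μ^t functions). -/
/-! Rockafellar's construction. Cyclical monotonicity says that every cycle has nonnegative
total cost for the edge costs `c a b = μ a (x a) - μ b (x a)`. Fixing a base point, the infimum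
`φ t` of the costs of paths from it to `t` is then finite (closing a path into a cycle bounds its
cost below) and satisfies the triangle inequality `φ b ≤ φ a + c a b`. The lower envelope
`u x = min_s (-φ s - μ s x)` is continuous and monotone because each `μ s` is, and the triangle
inequality says exactly that `u (x t) = -φ t - μ t (x t)`, which is the rationalization. -/

open Finset

namespace Rockafellar

variable {ι : Type*} (c : ι → ι → ℝ)

def pathCost (k : ℕ → ι) (m : ℕ) : ℝ :=
  ∑ j ∈ range m, c (k j) (k (j + 1))

lemma pathCost_update_succ (k : ℕ → ι) (m : ℕ) (t : ι) :
    pathCost c (Function.update k (m + 1) t) (m + 1) = pathCost c k m + c (k m) t := by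
  unfold pathCost
  rw [sum_range_succ, Function.update_self, Function.update_of_ne (by omega)]
  congr 1
  refine sum_congr rfl fun j hj => ?_
  rw [mem_range] at hj
  rw [Function.update_of_ne (by omega), Function.update_of_ne (by omega)]

def reachCosts (t₀ t : ι) : Set ℝ :=
  {r | ∃ k m, k 0 = t₀ ∧ k m = t ∧ pathCost c k m = r}

lemma pathCost_add_mem_reachCosts {t₀ s : ι} {r : ℝ} (hr : r ∈ reachCosts c t₀ s)
    (t : ι) : r + c s t ∈ reachCosts c t₀ t := by
  obtain ⟨k, m, hk0, hkm, rfl⟩ := hr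
  refine ⟨Function.update k (m + 1) t, m + 1, ?_, Function.update_self .., ?_⟩
  · rw [Function.update_of_ne (by omega), hk0]
  · rw [pathCost_update_succ, hkm]

lemma reachCosts_nonempty (t₀ t : ι) : (reachCosts c t₀ t).Nonempty :=
  ⟨0 + c t₀ t, pathCost_add_mem_reachCosts c ⟨fun _ => t₀, 0, rfl, rfl, rfl⟩ t⟩

variable {c}

lemma bddBelow_reachCosts
    (hc : ∀ N (k : ℕ → ι), 0 < N → k N = k 0 → 0 ≤ pathCost c k N) (t₀ t : ι) :
    BddBelow (reachCosts c t₀ t) := by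
  refine ⟨-c t t₀, fun r hr => ?_⟩
  obtain ⟨k, m, hk0, hkm, rfl⟩ := hr
  have hcycle := hc (m + 1) (Function.update k (m + 1) t₀) m.succ_pos
    (by rw [Function.update_self, Function.update_of_ne (by omega), hk0])
  rw [pathCost_update_succ, hkm] at hcycle
  linarith

theorem exists_potential_of_cycle_nonneg
    (hc : ∀ N (k : ℕ → ι), 0 < N → k N = k 0 → 0 ≤ pathCost c k N) :
    ∃ φ : ι → ℝ, ∀ a b, φ b ≤ φ a + c a b := by
  rcases isEmpty_or_nonempty ι with hι | ⟨⟨t₀⟩⟩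
  · exact ⟨0, fun a => isEmptyElim a⟩
  refine ⟨fun t => sInf (reachCosts c t₀ t), fun a b => ?_⟩
  have hle : ∀ r ∈ reachCosts c t₀ a, sInf (reachCosts c t₀ b) - c a b ≤ r := fun r hr =>
    sub_le_iff_le_add.2 <|
      csInf_le (bddBelow_reachCosts hc t₀ b) (pathCost_add_mem_reachCosts c hr b)
  linarith [le_csInf (reachCosts_nonempty c t₀ a) hle]

end Rockafellar

open Rockafellar in
theorem cyclical_monotonicity_implies_ql_rationalization_general {n T : ℕ} (hT : 0 < T)
    (X : Set (Fin n → ℝ)) (xs : Fin T → (Fin n → ℝ))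
    (μ : Fin T → (Fin n → ℝ) → ℝ)
    (hcont : ∀ t, ContinuousOn (μ t) X)
    (hdecr : ∀ t, ∀ x ∈ X, ∀ y ∈ X, x ≤ y → μ t y ≤ μ t x)
    (hcyc : ∀ (N : ℕ) (k : ℕ → Fin T), 0 < N → k N = k 0 →
      0 ≤ ∑ j ∈ Finset.range N,
        (μ (k j) (xs (k j)) - μ (k (j + 1)) (xs (k j)))) :
    ∃ u : (Fin n → ℝ) → ℝ,
      ContinuousOn u X ∧
      (∀ x ∈ X, ∀ y ∈ X, x ≤ y → u x ≤ u y) ∧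
      (∀ t, ∀ x ∈ X, ∀ m : ℝ, m ≤ μ t x → u x + m ≤ u (xs t) + μ t (xs t)) := by
  have hne : (univ : Finset (Fin T)).Nonempty := ⟨⟨0, hT⟩, mem_univ _⟩
  obtain ⟨φ, hφ⟩ :=
    exists_potential_of_cycle_nonneg (c := fun a b => μ a (xs a) - μ b (xs a)) hcyc
  refine ⟨fun x => univ.inf' hne fun s => -φ s - μ s x, ?_, ?_, ?_⟩
  · exact ContinuousOn.finset_inf'_apply hne fun s _ => continuousOn_const.sub (hcont s)
  · intro x hx y hy hxy
    exact inf'_mono_fun fun s _ => sub_le_sub_left (hdecr s x hx y hy hxy) _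
  · intro t x _ m hm
    have hx : univ.inf' hne (fun s => -φ s - μ s x) ≤ -φ t - μ t x := inf'_le _ (mem_univ t)
    have hxt : -φ t - μ t (xs t) ≤ univ.inf' hne fun s => -φ s - μ s (xs t) :=
      le_inf' _ _ fun s _ => by linarith [hφ t s]
    linarith

/-- Sufficiency: if a consumption experiment satisfies cyclical monotonicity, then it is
rationalized by a quasilinear utility `v(x,m) = u(x) + m`, where moreover the subutility `u`
can be chosen continuous and monotone (increasing on `X`). -/
theorem cyclical_monotonicity_implies_ql_rationalization {n T : ℕ} (hT : 0 < T)
    (X : Set (Fin n → ℝ)) (xs : Fin T → (Fin n → ℝ)) (hxX : ∀ t, xs t ∈ X)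
    (μ : Fin T → (Fin n → ℝ) → ℝ)
    (hcont : ∀ t, ContinuousOn (μ t) X)
    (hdecr : ∀ t, ∀ x ∈ X, ∀ y ∈ X, x ≤ y → μ t y ≤ μ t x)
    (hsdecr : ∀ t, ∀ x ∈ X, ∀ y ∈ X, x < y → μ t y < μ t x)
    (hcyc : ∀ (N : ℕ) (k : ℕ → Fin T), 0 < N → k N = k 0 →
      0 ≤ ∑ j ∈ Finset.range N,
        (μ (k j) (xs (k j)) - μ (k (j + 1)) (xs (k j)))) :
    ∃ u : (Fin n → ℝ) → ℝ,
      ContinuousOn u X ∧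
      (∀ x ∈ X, ∀ y ∈ X, x ≤ y → u x ≤ u y) ∧
      (∀ t, ∀ x ∈ X, ∀ m : ℝ, m ≤ μ t x → u x + m ≤ u (xs t) + μ t (xs t)) :=
  cyclical_monotonicity_implies_ql_rationalization_general hT X xs μ hcont hdecr hcyc
end

section
/- A consumption experiment E = ((x^t, m^t), B^t)_{t=1}^T can be rationalized by a quasilinear utility function if and only if it satisfies cyclical monotonicity. -/
/-!
Writing `v t = u (x^t) + m^t`, a quasilinear rationalization is the same thing as a potential
`v` with `v a ≤ v b + w a b` for the edge costs `w a b = μ^a(x^a) - μ^b(x^a)`: conversely, from a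
potential one recovers `u x = min_t (v t - μ^t x)`. Along a cycle the potential telescopes, so
potentials force cyclical monotonicity, i.e. nonnegative cycle costs. If all cycles are
nonnegative, minus the infimal cost of paths from a fixed root is a potential, as in
Rockafellar's proof for cyclically monotone subdifferentials.
-/

open Finset

section Potential

variable {ι : Type*} (w : ι → ι → ℝ)

def pathCost (k : ℕ → ι) (N : ℕ) : ℝ :=
  ∑ j ∈ range N, w (k j) (k (j + 1))

def NoNegativeCycle : Prop :=
  ∀ (N : ℕ) (k : ℕ → ι), 0 < N → k N = k 0 → 0 ≤ pathCost w k N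

def IsPotential (v : ι → ℝ) : Prop :=
  ∀ a b, v a ≤ v b + w a b

variable {w}

theorem IsPotential.noNegativeCycle {v : ι → ℝ} (hv : IsPotential w v) : NoNegativeCycle w := by
  intro N k _ hk
  have htelescope : ∑ j ∈ range N, (v (k j) - v (k (j + 1))) = 0 := by
    rw [sum_range_sub', hk, sub_self]
  rw [← htelescope]
  exact sum_le_sum fun j _ => by linarith [hv (k j) (k (j + 1))]

def pathCostsFrom (w : ι → ι → ℝ) (z a : ι) : Set ℝ :=
  {r | ∃ (N : ℕ) (k : ℕ → ι), k 0 = z ∧ k N = a ∧ r = pathCost w k N}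

theorem add_mem_pathCostsFrom {z a : ι} {r : ℝ} (hr : r ∈ pathCostsFrom w z a) (b : ι) :
    r + w a b ∈ pathCostsFrom w z b := by
  obtain ⟨N, k, hk0, hkN, rfl⟩ := hr
  refine ⟨N + 1, Function.update k (N + 1) b, by simp [hk0], by simp, ?_⟩
  have hagree : ∀ j ≤ N, Function.update k (N + 1) b j = k j := fun j hj =>
    Function.update_of_ne (by omega) _ _
  symm
  rw [pathCost, pathCost, sum_range_succ, hagree N le_rfl, hkN, Function.update_self]
  congr 1
  exact sum_congr rfl fun j hj => by
    rw [mem_range] at hj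
    rw [hagree j hj.le, hagree (j + 1) hj]

theorem edgeCost_mem_pathCostsFrom (z a : ι) : w z a ∈ pathCostsFrom w z a :=
  ⟨1, fun j => if j = 0 then z else a, rfl, rfl, by simp [pathCost]⟩

theorem NoNegativeCycle.bddBelow_pathCostsFrom (hw : NoNegativeCycle w) (z a : ι) :
    BddBelow (pathCostsFrom w z a) := by
  refine ⟨-w a z, fun r hr => ?_⟩
  obtain ⟨N, k, hk0, hkN, hcycle⟩ := add_mem_pathCostsFrom hr z
  have : 0 ≤ pathCost w k N := by
    rcases N.eq_zero_or_pos with rfl | hN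
    · simp [pathCost]
    · exact hw N k hN (hkN.trans hk0.symm)
  linarith

theorem NoNegativeCycle.isPotential_neg_sInf_pathCostsFrom (hw : NoNegativeCycle w) (z : ι) :
    IsPotential w fun a => -sInf (pathCostsFrom w z a) := by
  intro a b
  have hle : ∀ r ∈ pathCostsFrom w z a, sInf (pathCostsFrom w z b) - w a b ≤ r := fun r hr => by
    linarith [csInf_le (hw.bddBelow_pathCostsFrom z b) (add_mem_pathCostsFrom hr b)]
  linarith [le_csInf ⟨_, edgeCost_mem_pathCostsFrom z a⟩ hle]

theorem exists_isPotential_iff_noNegativeCycle :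
    (∃ v, IsPotential w v) ↔ NoNegativeCycle w := by
  refine ⟨fun ⟨_, hv⟩ => hv.noNegativeCycle, fun hw => ?_⟩
  rcases isEmpty_or_nonempty ι with hι | ⟨⟨z⟩⟩
  · exact ⟨0, fun a => isEmptyElim a⟩
  · exact ⟨_, hw.isPotential_neg_sInf_pathCostsFrom z⟩

end Potential

section Quasilinear

variable {ι α : Type*} (X : Set α) (xs : ι → α) (μ : ι → α → ℝ)

def QLRationalizes (u : α → ℝ) : Prop :=
  ∀ t, ∀ x ∈ X, ∀ m : ℝ, m ≤ μ t x → u x + m ≤ u (xs t) + μ t (xs t)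

def qlEdgeCost (a b : ι) : ℝ :=
  μ a (xs a) - μ b (xs a)

variable {X xs μ}

theorem QLRationalizes.isPotential {u : α → ℝ} (hxX : ∀ t, xs t ∈ X)
    (hu : QLRationalizes X xs μ u) :
    IsPotential (qlEdgeCost xs μ) fun t => u (xs t) + μ t (xs t) := by
  intro a b
  have := hu b (xs a) (hxX a) (μ b (xs a)) le_rfl
  simp only [qlEdgeCost]
  linarith

theorem IsPotential.qlRationalizes_iInf [Finite ι] {v : ι → ℝ}
    (hv : IsPotential (qlEdgeCost xs μ) v) :
    QLRationalizes X xs μ fun x => ⨅ t, (v t - μ t x) := by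
  intro t x _ m hm
  have hbdd : ∀ y, BddBelow (Set.range fun s => v s - μ s y) := fun y =>
    (Set.finite_range _).bddBelow
  have hx : ⨅ s, (v s - μ s x) ≤ v t - μ t x := ciInf_le (hbdd x) t
  have hxt : v t - μ t (xs t) ≤ ⨅ s, (v s - μ s (xs t)) :=
    have : Nonempty ι := ⟨t⟩
    le_ciInf fun s => by
      have := hv t s
      rw [qlEdgeCost] at this
      linarith
  linarith

theorem exists_qlRationalizes_iff_exists_isPotential [Finite ι] (hxX : ∀ t, xs t ∈ X) :
    (∃ u, QLRationalizes X xs μ u) ↔ ∃ v, IsPotential (qlEdgeCost xs μ) v :=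
  ⟨fun ⟨_, hu⟩ => ⟨_, hu.isPotential hxX⟩, fun ⟨_, hv⟩ => ⟨_, hv.qlRationalizes_iInf⟩⟩

end Quasilinear

theorem ql_rationalizable_iff_cyclically_monotone_general {n T : ℕ}
    (X : Set (Fin n → ℝ)) (xs : Fin T → (Fin n → ℝ)) (hxX : ∀ t, xs t ∈ X)
    (μ : Fin T → (Fin n → ℝ) → ℝ) :
    (∃ u : (Fin n → ℝ) → ℝ,
      ∀ t, ∀ x ∈ X, ∀ m : ℝ, m ≤ μ t x → u x + m ≤ u (xs t) + μ t (xs t)) ↔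
    (∀ (N : ℕ) (k : ℕ → Fin T), 0 < N → k N = k 0 →
      0 ≤ ∑ j ∈ Finset.range N,
        (μ (k j) (xs (k j)) - μ (k (j + 1)) (xs (k j)))) :=
  (exists_qlRationalizes_iff_exists_isPotential hxX).trans exists_isPotential_iff_noNegativeCycle

/-- Theorem 1: a consumption experiment can be rationalized by a quasilinear utility
function if and only if it satisfies cyclical monotonicity. -/
theorem ql_rationalizable_iff_cyclically_monotone {n T : ℕ} (hT : 0 < T)
    (X : Set (Fin n → ℝ)) (xs : Fin T → (Fin n → ℝ)) (hxX : ∀ t, xs t ∈ X)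
    (μ : Fin T → (Fin n → ℝ) → ℝ)
    (hcont : ∀ t, ContinuousOn (μ t) X)
    (hdecr : ∀ t, ∀ x ∈ X, ∀ y ∈ X, x ≤ y → μ t y ≤ μ t x)
    (hsdecr : ∀ t, ∀ x ∈ X, ∀ y ∈ X, x < y → μ t y < μ t x) :
    (∃ u : (Fin n → ℝ) → ℝ,
      ∀ t, ∀ x ∈ X, ∀ m : ℝ, m ≤ μ t x → u x + m ≤ u (xs t) + μ t (xs t)) ↔
    (∀ (N : ℕ) (k : ℕ → Fin T), 0 < N → k N = k 0 →
      0 ≤ ∑ j ∈ Finset.range N,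
        (μ (k j) (xs (k j)) - μ (k (j + 1)) (xs (k j)))) :=
  ql_rationalizable_iff_cyclically_monotone_general X xs hxX μ
end

section
/- A consumption experiment E = ((x^t, m^t), B^t)_{t=1}^T can be rationalized by a quasilinear utility function if and only if there exist real numbers u_1, ..., u_T satisfying u_t − u_s ≥ μ^t(x^s) − μ^t(x^t) for every pair of indices t, s ∈ {1,...,T}. -/
/-!
With quasilinear utility the binding budget constraint `m = μ^t(x)` is the only one that matters,
so `u` rationalizes the experiment iff `u x + μ^t(x) ≤ u(x^t) + μ^t(x^t)` on `X`. Evaluating this at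
the observations gives the Afriat inequalities for `u_t = u(x^t)`. Conversely, given a solution
`u_t`, the lower envelope `u(x) = min_t (u_t + μ^t(x^t) − μ^t(x))` satisfies these inequalities by
construction, and the Afriat inequalities say exactly that it takes the value `u_t` at `x^t`.
-/

section QuasilinearRationalization

variable {ι α : Type*}

def IsQLRationalization (X : Set α) (xs : ι → α) (μ : ι → α → ℝ) (u : α → ℝ) : Prop :=
  ∀ t, ∀ x ∈ X, ∀ m : ℝ, m ≤ μ t x → u x + m ≤ u (xs t) + μ t (xs t)

def AfriatInequalities (xs : ι → α) (μ : ι → α → ℝ) (uv : ι → ℝ) : Prop :=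
  ∀ t s, uv t - uv s ≥ μ t (xs s) - μ t (xs t)

theorem isQLRationalization_iff {X : Set α} {xs : ι → α} {μ : ι → α → ℝ} {u : α → ℝ} :
    IsQLRationalization X xs μ u ↔ ∀ t, ∀ x ∈ X, u x + μ t x ≤ u (xs t) + μ t (xs t) :=
  ⟨fun hu t x hx => hu t x hx _ le_rfl,
    fun hu t x hx _ hm => (add_le_add_right hm _).trans (hu t x hx)⟩

theorem IsQLRationalization.afriatInequalities {X : Set α} {xs : ι → α} {μ : ι → α → ℝ}
    {u : α → ℝ} (hu : IsQLRationalization X xs μ u) (hxX : ∀ t, xs t ∈ X) :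
    AfriatInequalities xs μ (u ∘ xs) := fun t s => by
  have := isQLRationalization_iff.mp hu t (xs s) (hxX s)
  simp only [Function.comp_apply]
  linarith

noncomputable def afriatUtility (xs : ι → α) (μ : ι → α → ℝ) (uv : ι → ℝ) (x : α) : ℝ :=
  ⨅ t, (uv t + μ t (xs t) - μ t x)

theorem afriatUtility_le [Finite ι] (xs : ι → α) (μ : ι → α → ℝ) (uv : ι → ℝ) (t : ι) (x : α) :
    afriatUtility xs μ uv x ≤ uv t + μ t (xs t) - μ t x :=
  ciInf_le (Set.finite_range _).bddBelow t

variable [Finite ι] {xs : ι → α} {μ : ι → α → ℝ} {uv : ι → ℝ}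

theorem AfriatInequalities.afriatUtility_apply (huv : AfriatInequalities xs μ uv) (t : ι) :
    afriatUtility xs μ uv (xs t) = uv t := by
  have : Nonempty ι := ⟨t⟩
  refine le_antisymm (by simpa using afriatUtility_le xs μ uv t (xs t)) (le_ciInf fun s => ?_)
  linarith [huv s t]

theorem AfriatInequalities.isQLRationalization (huv : AfriatInequalities xs μ uv) (X : Set α) :
    IsQLRationalization X xs μ (afriatUtility xs μ uv) :=
  isQLRationalization_iff.mpr fun t x _ => by
    rw [huv.afriatUtility_apply t]
    linarith [afriatUtility_le xs μ uv t x]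

end QuasilinearRationalization

theorem ql_rationalizable_iff_afriat_inequalities_general {n T : ℕ}
    (X : Set (Fin n → ℝ)) (xs : Fin T → (Fin n → ℝ)) (hxX : ∀ t, xs t ∈ X)
    (μ : Fin T → (Fin n → ℝ) → ℝ) :
    (∃ u : (Fin n → ℝ) → ℝ,
      ∀ t, ∀ x ∈ X, ∀ m : ℝ, m ≤ μ t x → u x + m ≤ u (xs t) + μ t (xs t)) ↔
    (∃ uv : Fin T → ℝ, ∀ t s : Fin T,
      uv t - uv s ≥ μ t (xs s) - μ t (xs t)) :=
  ⟨fun ⟨u, hu⟩ => ⟨u ∘ xs, IsQLRationalization.afriatInequalities hu hxX⟩,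
    fun ⟨_, huv⟩ => ⟨_, AfriatInequalities.isQLRationalization huv X⟩⟩

/-- Remark: QL rationalizability is equivalent to solvability of the finite system of
Afriat-type quasilinear inequalities `u_t − u_s ≥ μ^t(x^s) − μ^t(x^t)`. -/
theorem ql_rationalizable_iff_afriat_inequalities {n T : ℕ} (hT : 0 < T)
    (X : Set (Fin n → ℝ)) (xs : Fin T → (Fin n → ℝ)) (hxX : ∀ t, xs t ∈ X)
    (μ : Fin T → (Fin n → ℝ) → ℝ)
    (hcont : ∀ t, ContinuousOn (μ t) X)
    (hdecr : ∀ t, ∀ x ∈ X, ∀ y ∈ X, x ≤ y → μ t y ≤ μ t x)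
    (hsdecr : ∀ t, ∀ x ∈ X, ∀ y ∈ X, x < y → μ t y < μ t x) :
    (∃ u : (Fin n → ℝ) → ℝ,
      ∀ t, ∀ x ∈ X, ∀ m : ℝ, m ≤ μ t x → u x + m ≤ u (xs t) + μ t (xs t)) ↔
    (∃ uv : Fin T → ℝ, ∀ t s : Fin T,
      uv t - uv s ≥ μ t (xs s) - μ t (xs t)) :=
  ql_rationalizable_iff_afriat_inequalities_general X xs hxX μ
end

section
/- Finite solvability of the Afriat-type quasilinear inequalities is equivalent to cyclical monotonicity: given real numbers a_{ts} for t, s ∈ {1,...,T} (interpreted as a_{ts} = μ^t(x^t) − μ^t(x^s)), there exist real numbers u_1,...,u_T with u_t − u_s ≥ −a_{ts} for all t, s if and only if every cyclic sum a_{k_1 k_2} + a_{k_2 k_3} + ... + a_{k_n k_1} is nonnegative. -/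
/-!
Read `u s` as a distance to `s`: fixing a base point `b`, let `u s` be the infimum of the
weights of all walks from `b` to `s`. Closing such a walk with the edge `s → b` gives a cycle,
so nonnegative cycles bound `u s` below by `-a s b`; appending the edge `t → s` to a walk ending
at `t` gives `u s ≤ u t + a t s`. Conversely, along any cycle the inequalities
`u (k (j+1)) - u (k j) ≤ a (k j) (k (j+1))` telescope to `0 ≤` the cyclic sum.
-/

open Finset

variable {ι : Type*}

def walkWeight (a : ι → ι → ℝ) (n : ℕ) (k : ℕ → ι) : ℝ :=
  ∑ j ∈ range n, a (k j) (k (j + 1))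

def NonnegCycles (a : ι → ι → ℝ) : Prop :=
  ∀ (N : ℕ) (k : ℕ → ι), 0 < N → k N = k 0 → 0 ≤ walkWeight a N k

lemma sub_le_walkWeight {a : ι → ι → ℝ} {u : ι → ℝ} (hu : ∀ t s, u t - u s ≥ -a t s)
    (n : ℕ) (k : ℕ → ι) : u (k n) - u (k 0) ≤ walkWeight a n k := by
  rw [← sum_range_sub (fun j => u (k j))]
  exact sum_le_sum fun j _ => by linarith [hu (k j) (k (j + 1))]

lemma nonnegCycles_of_potential {a : ι → ι → ℝ} {u : ι → ℝ}
    (hu : ∀ t s, u t - u s ≥ -a t s) : NonnegCycles a := by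
  intro N k _ hk
  simpa [hk] using sub_le_walkWeight hu N k

def snocWalk (k : ℕ → ι) (n : ℕ) (s : ι) : ℕ → ι :=
  fun j => if j ≤ n then k j else s

@[simp]
lemma snocWalk_zero (k : ℕ → ι) (n : ℕ) (s : ι) : snocWalk k n s 0 = k 0 := by
  simp [snocWalk]

@[simp]
lemma snocWalk_succ_self (k : ℕ → ι) (n : ℕ) (s : ι) : snocWalk k n s (n + 1) = s := by
  simp [snocWalk]

lemma walkWeight_snocWalk (a : ι → ι → ℝ) (k : ℕ → ι) (n : ℕ) (s : ι) :
    walkWeight a (n + 1) (snocWalk k n s) = walkWeight a n k + a (k n) s := by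
  rw [walkWeight, sum_range_succ, snocWalk_succ_self]
  congr 1
  · refine sum_congr rfl fun j hj => ?_
    have hj : j + 1 ≤ n := mem_range.mp hj
    simp [snocWalk, hj, (Nat.le_succ j).trans hj]
  · simp [snocWalk]

lemma neg_le_walkWeight {a : ι → ι → ℝ} (ha : NonnegCycles a) (n : ℕ) (k : ℕ → ι) :
    -a (k n) (k 0) ≤ walkWeight a n k := by
  have := ha (n + 1) (snocWalk k n (k 0)) n.succ_pos (by simp)
  rw [walkWeight_snocWalk] at this
  linarith

def walkWeights (a : ι → ι → ℝ) (b s : ι) : Set ℝ :=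
  {w | ∃ n k, k 0 = b ∧ k n = s ∧ walkWeight a n k = w}

lemma walkWeights_nonempty (a : ι → ι → ℝ) (b s : ι) : (walkWeights a b s).Nonempty :=
  ⟨_, 1, snocWalk (fun _ => b) 0 s, by simp, by simp, rfl⟩

lemma bddBelow_walkWeights {a : ι → ι → ℝ} (ha : NonnegCycles a) (b s : ι) :
    BddBelow (walkWeights a b s) := by
  refine ⟨-a s b, ?_⟩
  rintro _ ⟨n, k, rfl, rfl, rfl⟩
  exact neg_le_walkWeight ha n k

lemma sInf_walkWeights_le_add {a : ι → ι → ℝ} (ha : NonnegCycles a) (b t s : ι) :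
    sInf (walkWeights a b s) ≤ sInf (walkWeights a b t) + a t s := by
  suffices sInf (walkWeights a b s) - a t s ≤ sInf (walkWeights a b t) by linarith
  refine le_csInf (walkWeights_nonempty a b t) ?_
  rintro _ ⟨n, k, hk0, hkn, rfl⟩
  have : walkWeight a n k + a t s ∈ walkWeights a b s :=
    ⟨n + 1, snocWalk k n s, by simp [hk0], by simp, by rw [walkWeight_snocWalk, hkn]⟩
  linarith [csInf_le (bddBelow_walkWeights ha b s) this]

theorem exists_potential_iff_nonnegCycles (a : ι → ι → ℝ) :
    (∃ u : ι → ℝ, ∀ t s, u t - u s ≥ -a t s) ↔ NonnegCycles a := by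
  refine ⟨fun ⟨u, hu⟩ => nonnegCycles_of_potential hu, fun ha => ?_⟩
  rcases isEmpty_or_nonempty ι with hι | ⟨⟨b⟩⟩
  · exact ⟨isEmptyElim, isEmptyElim⟩
  · refine ⟨fun s => sInf (walkWeights a b s), fun t s => ?_⟩
    linarith [sInf_walkWeights_le_add ha b t s]

theorem afriat_solvable_iff_nonneg_cycles_general {T : ℕ}
    (a : Fin T → Fin T → ℝ) :
    (∃ u : Fin T → ℝ, ∀ t s : Fin T, u t - u s ≥ -a t s) ↔
    (∀ (N : ℕ) (k : ℕ → Fin T), 0 < N → k N = k 0 →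
      0 ≤ ∑ j ∈ Finset.range N, a (k j) (k (j + 1))) :=
  exists_potential_iff_nonnegCycles a

/-- Finite solvability of the Afriat-type quasilinear inequalities is equivalent to
cyclical monotonicity of the weights `a`. -/
theorem afriat_solvable_iff_nonneg_cycles {T : ℕ} (hT : 0 < T)
    (a : Fin T → Fin T → ℝ) (hdiag : ∀ t, a t t = 0) :
    (∃ u : Fin T → ℝ, ∀ t s : Fin T, u t - u s ≥ -a t s) ↔
    (∀ (N : ℕ) (k : ℕ → Fin T), 0 < N → k N = k 0 →
      0 ≤ ∑ j ∈ Finset.range N, a (k j) (k (j + 1))) :=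
  afriat_solvable_iff_nonneg_cycles_general a
end

section
/- Suppose real numbers u_1, ..., u_T satisfy u_t − u_s ≥ μ^t(x^s) − μ^t(x^t) for all t, s ∈ {1,...,T}, where each μ^t : X → ℝ is continuous and decreasing. Define u : X → ℝ by u(x) = min_{t ∈ {1,...,T}} { u_t + μ^t(x^t) − μ^t(x) }. Then (i) u is continuous, (ii) u is increasing (since each μ^t is decreasing), and (iii) u(x^t) = u_t for every t. -/
/-!
Each candidate `x ↦ u_t + μ^t(x^t) − μ^t(x)` is continuous and increasing, and these properties
survive a minimum over finitely many indices. At `x^s` the candidate with index `s` equals `u_s`,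
while the Afriat inequalities say exactly that no other candidate falls below `u_s` there.
-/

open Set

section FiniteInfimum

variable {ι α L : Type*} [ConditionallyCompleteLattice L] {f : ι → α → L}

lemma ContinuousOn.ciInf_of_fintype [TopologicalSpace α] [TopologicalSpace L] [ContinuousInf L]
    [Fintype ι] [Nonempty ι] {s : Set α} (hf : ∀ i, ContinuousOn (f i) s) :
    ContinuousOn (fun x ↦ ⨅ i, f i x) s := by
  simpa only [← Finset.inf'_univ_eq_ciInf] using
    ContinuousOn.finset_inf'_apply Finset.univ_nonempty fun i _ ↦ hf i

lemma MonotoneOn.ciInf_of_finite [Preorder α] [Finite ι] {s : Set α}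
    (hf : ∀ i, MonotoneOn (f i) s) : MonotoneOn (fun x ↦ ⨅ i, f i x) s :=
  fun _ hx _ hy hxy ↦ ciInf_mono (finite_range _).bddBelow fun i ↦ hf i hx hy hxy

end FiniteInfimum

section AfriatExtension

variable {ι E : Type*} (uv : ι → ℝ) (μ : ι → E → ℝ) (xs : ι → E)

noncomputable def afriatExtension (x : E) : ℝ :=
  ⨅ t, uv t + μ t (xs t) - μ t x

variable {uv μ xs}

lemma continuousOn_afriatExtension [TopologicalSpace E] [Fintype ι] [Nonempty ι] {X : Set E}
    (hcont : ∀ t, ContinuousOn (μ t) X) : ContinuousOn (afriatExtension uv μ xs) X :=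
  ContinuousOn.ciInf_of_fintype fun t ↦ continuousOn_const.sub (hcont t)

lemma monotoneOn_afriatExtension [Preorder E] [Finite ι] {X : Set E}
    (hdecr : ∀ t, AntitoneOn (μ t) X) : MonotoneOn (afriatExtension uv μ xs) X :=
  MonotoneOn.ciInf_of_finite fun t _ hx _ hy hxy ↦ sub_le_sub_left (hdecr t hx hy hxy) _

lemma afriatExtension_apply_data [Finite ι]
    (hafriat : ∀ t s, uv t - uv s ≥ μ t (xs s) - μ t (xs t)) (s : ι) :
    afriatExtension uv μ xs (xs s) = uv s := by
  have hbdd := (finite_range fun t ↦ uv t + μ t (xs t) - μ t (xs s)).bddBelow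
  refine le_antisymm ((ciInf_le hbdd s).trans_eq (add_sub_cancel_right _ _)) ?_
  have : Nonempty ι := ⟨s⟩
  exact le_ciInf fun t ↦ by linarith [hafriat t s]

end AfriatExtension

theorem afriat_extension_properties_general {n T : ℕ} (hT : 0 < T)
    (X : Set (Fin n → ℝ)) (xs : Fin T → (Fin n → ℝ))
    (μ : Fin T → (Fin n → ℝ) → ℝ)
    (hcont : ∀ t, ContinuousOn (μ t) X)
    (hdecr : ∀ t, ∀ x ∈ X, ∀ y ∈ X, x ≤ y → μ t y ≤ μ t x)
    (uv : Fin T → ℝ)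
    (hafriat : ∀ t s : Fin T, uv t - uv s ≥ μ t (xs s) - μ t (xs t))
    (u : (Fin n → ℝ) → ℝ)
    (hu : ∀ x, u x = sInf (Set.range fun t : Fin T => uv t + μ t (xs t) - μ t x)) :
    ContinuousOn u X ∧
    (∀ x ∈ X, ∀ y ∈ X, x ≤ y → u x ≤ u y) ∧
    (∀ t, u (xs t) = uv t) := by
  obtain rfl : u = afriatExtension uv μ xs := funext hu
  have : Nonempty (Fin T) := ⟨⟨0, hT⟩⟩
  exact ⟨continuousOn_afriatExtension hcont,
    monotoneOn_afriatExtension hdecr,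
    afriatExtension_apply_data hafriat⟩

/-- Extension step: given utility numbers solving the quasilinear Afriat inequalities,
the function `u(x) = min_t { u_t + μ^t(x^t) − μ^t(x) }` is (i) continuous on `X`,
(ii) increasing on `X`, and (iii) interpolates the data: `u(x^t) = u_t`. -/
theorem afriat_extension_properties {n T : ℕ} (hT : 0 < T)
    (X : Set (Fin n → ℝ)) (xs : Fin T → (Fin n → ℝ)) (hxX : ∀ t, xs t ∈ X)
    (μ : Fin T → (Fin n → ℝ) → ℝ)
    (hcont : ∀ t, ContinuousOn (μ t) X)
    (hdecr : ∀ t, ∀ x ∈ X, ∀ y ∈ X, x ≤ y → μ t y ≤ μ t x)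
    (uv : Fin T → ℝ)
    (hafriat : ∀ t s : Fin T, uv t - uv s ≥ μ t (xs s) - μ t (xs t))
    (u : (Fin n → ℝ) → ℝ)
    (hu : ∀ x, u x = sInf (Set.range fun t : Fin T => uv t + μ t (xs t) - μ t x)) :
    ContinuousOn u X ∧
    (∀ x ∈ X, ∀ y ∈ X, x ≤ y → u x ≤ u y) ∧
    (∀ t, u (xs t) = uv t) :=
  afriat_extension_properties_general hT X xs μ hcont hdecr uv hafriat u hu
end

section
/- A consumption experiment E = ((x^t, m^t), B^t)_{t=1}^T with differentiable concave budget frontiers μ^t can be rationalized by a CONCAVE quasilinear utility function v(x,m) = u(x) + m (u concave) if and only if the linearized experiment — with budgets given by μ^t_∇(x) = μ^t(x^t) + ∇μ^t(x^t)·(x − x^t) — satisfies cyclical monotonicity: for every index cycle k_1,...,k_n (k_{n+1}=k_1), Σ_j [μ^{k_j}_∇(x^{k_j}) − μ^{k_{j+1}}_∇(x^{k_j})] ≥ 0. -/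
/-!
A concave `u` rationalizes the data iff each `xᵗ` maximizes `u + μᵗ` on `X`. For such a maximizer
the first-order condition reads `u x - u xᵗ ≤ -∇μᵗ(xᵗ)·(x - xᵗ)`, so the numbers
`Uₜ = u xᵗ + μᵗ(xᵗ)` satisfy `Uₛ ≤ Uₜ + μˢ(xˢ) - μᵗ_∇(xˢ)`, and summing along a cycle telescopes
to cyclical monotonicity. Conversely, cyclical monotonicity yields such numbers `Uₜ` (least weight
of a walk to a fixed base point), and then `u x = minₜ (Uₜ - μᵗ_∇(x))` is concave as a minimum of
affine functions, equals `Uₜ - μᵗ(xᵗ)` at `xᵗ`, and rationalizes the data because the concave `μᵗ`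
lies below its linearization `μᵗ_∇`.
-/

open Finset

section Potential

variable {ι : Type*} (w : ι → ι → ℝ)

def walkSum (k : ℕ → ι) (N : ℕ) : ℝ :=
  ∑ j ∈ range N, w (k j) (k (j + 1))

def consWalk (s : ι) (k : ℕ → ι) : ℕ → ι
  | 0 => s
  | j + 1 => k j

theorem walkSum_consWalk (s : ι) (k : ℕ → ι) (N : ℕ) :
    walkSum w (consWalk s k) (N + 1) = w s (k 0) + walkSum w k N := by
  rw [walkSum, sum_range_succ', add_comm]
  rfl

variable {w}

theorem walkSum_nonneg_of_potential {U : ι → ℝ} (hU : ∀ s t, U s ≤ U t + w s t)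
    {k : ℕ → ι} {N : ℕ} (hk : k N = k 0) : 0 ≤ walkSum w k N :=
  calc 0 = ∑ j ∈ range N, (U (k j) - U (k (j + 1))) := by rw [sum_range_sub', hk, sub_self]
    _ ≤ walkSum w k N := sum_le_sum fun j _ => by linarith [hU (k j) (k (j + 1))]

theorem exists_potential_of_forall_cycle [Nonempty ι]
    (hw : ∀ (N : ℕ) (k : ℕ → ι), 0 < N → k N = k 0 → 0 ≤ walkSum w k N) :
    ∃ U : ι → ℝ, ∀ s t, U s ≤ U t + w s t := by
  -- `U s` is the least weight of a walk from `s` to a base point `b`.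
  let b := Classical.arbitrary ι
  let P : ι → Set ℝ := fun s => {r | ∃ N k, k 0 = s ∧ k N = b ∧ walkSum w k N = r}
  have cons_mem : ∀ s t r, r ∈ P t → w s t + r ∈ P s := by
    rintro s t _ ⟨N, k, rfl, hkN, rfl⟩
    exact ⟨N + 1, consWalk s k, rfl, hkN, walkSum_consWalk w s k N⟩
  have nonempty : ∀ s, (P s).Nonempty := fun s =>
    ⟨_, cons_mem s b 0 ⟨0, fun _ => b, rfl, rfl, sum_range_zero _⟩⟩
  -- Closing a walk from `s` to `b` by the edge `b → s` gives a cycle.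
  have bddBelow : ∀ s, BddBelow (P s) := by
    refine fun s => ⟨-w b s, ?_⟩
    rintro _ ⟨N, k, rfl, hkN, rfl⟩
    have := hw (N + 1) (consWalk b k) N.succ_pos hkN
    rw [walkSum_consWalk] at this
    linarith
  refine ⟨fun s => sInf (P s), fun s t => ?_⟩
  have : sInf (P s) - w s t ≤ sInf (P t) := le_csInf (nonempty t) fun r hr => by
    linarith [csInf_le (bddBelow s) (cons_mem s t r hr)]
  linarith

theorem exists_potential_iff_forall_cycle [Nonempty ι] :
    (∃ U : ι → ℝ, ∀ s t, U s ≤ U t + w s t) ↔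
      ∀ (N : ℕ) (k : ℕ → ι), 0 < N → k N = k 0 → 0 ≤ walkSum w k N :=
  ⟨fun ⟨_, hU⟩ _ _ _ hk => walkSum_nonneg_of_potential hU hk, exists_potential_of_forall_cycle⟩

end Potential

theorem ConcaveOn.finset_inf' {ι 𝕜 E β : Type*} [Semiring 𝕜] [PartialOrder 𝕜]
    [AddCommMonoid E] [AddCommMonoid β] [LinearOrder β] [IsOrderedAddMonoid β] [SMul 𝕜 E]
    [Module 𝕜 β] [PosSMulStrictMono 𝕜 β] {X : Set E} {s : Finset ι} (hs : s.Nonempty)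
    {f : ι → E → β} (hf : ∀ i ∈ s, ConcaveOn 𝕜 X (f i)) : ConcaveOn 𝕜 X (s.inf' hs f) :=
  inf'_induction hs f (fun _ h₁ _ h₂ => h₁.inf h₂) hf

section Linearization

variable {E : Type*} [NormedAddCommGroup E] [NormedSpace ℝ E] {X : Set E} {x y : E}

noncomputable def linearization (f : E → ℝ) (y x : E) : ℝ :=
  f y + fderiv ℝ f y (x - y)

@[simp]
theorem linearization_self (f : E → ℝ) (y : E) : linearization f y y = f y := by
  simp [linearization]

theorem convexOn_linearization (hX : Convex ℝ X) (f : E → ℝ) (y : E) :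
    ConvexOn ℝ X (linearization f y) := by
  have : linearization f y = fun x => (fderiv ℝ f y : E →ₗ[ℝ] ℝ) x + (f y - fderiv ℝ f y y) := by
    ext x
    simp only [linearization, map_sub, ContinuousLinearMap.coe_coe]
    ring
  exact this ▸ ((fderiv ℝ f y : E →ₗ[ℝ] ℝ).convexOn hX).add_const _

theorem ConcaveOn.sub_le_of_isMaxOn_add {u f : E → ℝ} {f' : E →L[ℝ] ℝ} (hu : ConcaveOn ℝ X u)
    (hf : HasFDerivAt f f' y) (hx : x ∈ X) (hy : y ∈ X) (hmax : IsMaxOn (u + f) X y) :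
    u x - u y ≤ -f' (x - y) := by
  refine ge_of_tendsto ((hf.hasLineDerivAt (x - y)).tendsto_slope_zero_right).neg ?_
  -- Along the segment from `y` to `x`, concavity bounds the slope of `u` from below by
  -- `u x - u y`, and maximality of `y` bounds it from above by the slope of `-f`.
  filter_upwards [Ioc_mem_nhdsGT zero_lt_one] with ε ⟨hε, hε1⟩
  have hseg : (1 - ε) • y + ε • x = y + ε • (x - y) := by module
  have hchord := hu.2 hy hx (sub_nonneg.2 hε1) hε.le (sub_add_cancel 1 ε)
  rw [hseg, smul_eq_mul, smul_eq_mul] at hchord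
  have hmax' := isMaxOn_iff.1 hmax _ (hseg ▸ hu.1 hy hx (sub_nonneg.2 hε1) hε.le (by ring))
  simp only [Pi.add_apply] at hmax'
  rw [smul_eq_mul, ← mul_neg, neg_sub, le_inv_mul_iff₀ hε]
  nlinarith

theorem ConcaveOn.le_linearization {g : E → ℝ} (hg : ConcaveOn ℝ X g)
    (hd : DifferentiableAt ℝ g y) (hx : x ∈ X) (hy : y ∈ X) : g x ≤ linearization g y x := by
  have := hg.sub_le_of_isMaxOn_add hd.hasFDerivAt.neg hx hy (isMaxOn_iff.2 fun z _ => by simp)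
  rw [neg_apply, neg_neg] at this
  rw [linearization]
  linarith

end Linearization

theorem concave_ql_iff_linearized_cyclical_monotonicity_general {n T : ℕ} (hT : 0 < T)
    (X : Set (Fin n → ℝ)) (hXconv : Convex ℝ X)
    (xs : Fin T → (Fin n → ℝ)) (hxX : ∀ t, xs t ∈ X)
    (μ : Fin T → (Fin n → ℝ) → ℝ)
    (hdiff : ∀ t, Differentiable ℝ (μ t))
    (hconc : ∀ t, ConcaveOn ℝ X (μ t)) :
    (∃ u : (Fin n → ℝ) → ℝ, ConcaveOn ℝ X u ∧
      ∀ t, ∀ x ∈ X, ∀ m : ℝ, m ≤ μ t x → u x + m ≤ u (xs t) + μ t (xs t)) ↔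
    (∀ (N : ℕ) (k : ℕ → Fin T), 0 < N → k N = k 0 →
      0 ≤ ∑ j ∈ Finset.range N,
        (μ (k j) (xs (k j)) -
          (μ (k (j + 1)) (xs (k (j + 1))) +
            fderiv ℝ (μ (k (j + 1))) (xs (k (j + 1)))
              (xs (k j) - xs (k (j + 1)))))) := by
  have : Nonempty (Fin T) := ⟨⟨0, hT⟩⟩
  refine Iff.trans ?_ (exists_potential_iff_forall_cycle
    (w := fun s t => μ s (xs s) - linearization (μ t) (xs t) (xs s)))
  constructor
  · rintro ⟨u, hu, hrat⟩
    refine ⟨fun t => u (xs t) + μ t (xs t), fun s t => ?_⟩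
    have hmax : IsMaxOn (u + μ t) X (xs t) := isMaxOn_iff.2 fun x hx => hrat t x hx _ le_rfl
    have := hu.sub_le_of_isMaxOn_add (hdiff t _).hasFDerivAt (hxX s) (hxX t) hmax
    simp only [linearization]
    linarith
  · rintro ⟨U, hU⟩
    let u := univ.inf' univ_nonempty fun t x => U t - linearization (μ t) (xs t) x
    have hu_at : ∀ t, u (xs t) = U t - μ t (xs t) := fun t => by
      simp only [u, Finset.inf'_apply]
      refine le_antisymm ((inf'_le _ (mem_univ t)).trans_eq (by simp)) ?_
      exact le_inf' _ _ fun s _ => by linarith [hU t s]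
    refine ⟨u, ConcaveOn.finset_inf' _ fun t _ =>
      (concaveOn_const _ hXconv).sub (convexOn_linearization hXconv _ _), fun t x hx m hm => ?_⟩
    have hsupp : u x ≤ U t - linearization (μ t) (xs t) x := by
      simpa only [u, Finset.inf'_apply] using
        inf'_le (fun s => U s - linearization (μ s) (xs s) x) (mem_univ t)
    have := (hconc t).le_linearization (hdiff t _) hx (hxX t)
    rw [hu_at]
    linarith

/-- Remark 1: an experiment with differentiable concave budget frontiers is rationalized by a
concave quasilinear utility iff the linearized experiment satisfies cyclical monotonicity. -/
theorem concave_ql_iff_linearized_cyclical_monotonicity {n T : ℕ} (hT : 0 < T)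
    (X : Set (Fin n → ℝ)) (hXconv : Convex ℝ X)
    (xs : Fin T → (Fin n → ℝ)) (hxX : ∀ t, xs t ∈ X)
    (μ : Fin T → (Fin n → ℝ) → ℝ)
    (hdiff : ∀ t, Differentiable ℝ (μ t))
    (hconc : ∀ t, ConcaveOn ℝ X (μ t))
    (hdecr : ∀ t, ∀ x ∈ X, ∀ y ∈ X, x ≤ y → μ t y ≤ μ t x) :
    (∃ u : (Fin n → ℝ) → ℝ, ConcaveOn ℝ X u ∧
      ∀ t, ∀ x ∈ X, ∀ m : ℝ, m ≤ μ t x → u x + m ≤ u (xs t) + μ t (xs t)) ↔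
    (∀ (N : ℕ) (k : ℕ → Fin T), 0 < N → k N = k 0 →
      0 ≤ ∑ j ∈ Finset.range N,
        (μ (k j) (xs (k j)) -
          (μ (k (j + 1)) (xs (k (j + 1))) +
            fderiv ℝ (μ (k (j + 1))) (xs (k (j + 1)))
              (xs (k j) - xs (k (j + 1)))))) :=
  concave_ql_iff_linearized_cyclical_monotonicity_general hT X hXconv xs hxX μ hdiff hconc
end
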